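/- arXiv:1505.03328 — 4 statements merged into one kernel-verified Lean document; each statement's English description precedes it below -/
import Mathlib

section
/- Let G be a finite abelian group and A ⊆ G a nonempty subset that is not contained in any coset of a proper subgroup of G. Then either A·A⁻¹ = G or |A·A| ≥ (3/2)|A|. -/
/-!
If `|A·A| < (3/2)|A|`, then for every `g = a b⁻¹` the set `A ∩ g A` is a translate of
`b A ∩ a A ⊆ A·A` and so has more than `|A|/2` elements; any two such sets meet, which makes
`A·A⁻¹` closed under division. Thus `A·A⁻¹` is a subgroup `H` (Mathlib's
`Finset.invMulSubgroup`), and `A ⊆ a H` for any `a ∈ A`, so `H = G`.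
-/

open Pointwise

namespace Finset

variable {G : Type*} [Group G] [DecidableEq G]

lemma coe_subset_smul_invMulSubgroup {A : Finset G} (h : #(A * A) < (3 / 2 : ℚ) * #A)
    {a : G} (ha : a ∈ A) : (A : Set G) ⊆ a • (invMulSubgroup A h : Set G) := by
  intro x hx
  refine ⟨a⁻¹ * x, ?_, mul_inv_cancel_left a x⟩
  rw [invMulSubgroup_eq_inv_mul]
  exact Set.mul_mem_mul (by simpa using ha) hx

end Finset

theorem stmt0_general {G : Type*} [CommGroup G] [Fintype G] [DecidableEq G]
    (A : Finset G)
    (hcoset : ¬ ∃ (H : Subgroup G), H ≠ ⊤ ∧ ∃ x : G, (A : Set G) ⊆ x • (H : Set G)) :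
    A * A⁻¹ = Finset.univ ∨ 3 * A.card ≤ 2 * (A * A).card := by
  refine or_iff_not_imp_right.2 fun hsmall ↦ ?_
  have h : (A * A).card < (3 / 2 : ℚ) * A.card := by
    rw [not_le] at hsmall
    qify at hsmall
    linarith
  obtain ⟨a, ha⟩ : A.Nonempty := Finset.nonempty_iff_ne_empty.2 <| by rintro rfl; simp at hsmall
  have hH : A.invMulSubgroup h = ⊤ := by
    by_contra hne
    exact hcoset ⟨_, hne, a, Finset.coe_subset_smul_invMulSubgroup h ha⟩
  rw [← Finset.coe_inj, Finset.coe_mul, ← Finset.invMulSubgroup_eq_mul_inv A h, hH]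
  simp

/-- If a nonempty subset `A` of a finite abelian group `G` is not contained
in any coset of a proper subgroup, then either `A·A⁻¹ = G` or `|A·A| ≥ (3/2)|A|`. -/
theorem stmt0 {G : Type*} [CommGroup G] [Fintype G] [DecidableEq G]
    (A : Finset G) (hA : A.Nonempty)
    (hcoset : ¬ ∃ (H : Subgroup G), H ≠ ⊤ ∧ ∃ x : G, (A : Set G) ⊆ x • (H : Set G)) :
    A * A⁻¹ = Finset.univ ∨ 3 * A.card ≤ 2 * (A * A).card :=
  stmt0_general A hcoset
end

section
/- Let G be a finite abelian group and A ⊆ G a nonempty subset with |A·A| < (3/2)|A|. Then A·A⁻¹ is a subgroup of G. -/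
open Pointwise

theorem stmt1_general {G : Type*} [CommGroup G] [DecidableEq G]
    (A : Finset G)
    (hsmall : 2 * (A * A).card < 3 * A.card) :
    ∃ H : Subgroup G, ((A * A⁻¹ : Finset G) : Set G) = (H : Set G) := by
  have hdoubling : ((A * A).card : ℚ) < (3 / 2 : ℚ) * A.card := by
    have : (2 * (A * A).card : ℚ) < 3 * A.card := by exact_mod_cast hsmall
    linarith
  refine ⟨A.invMulSubgroup hdoubling, ?_⟩
  rw [Finset.invMulSubgroup_eq_mul_inv, Finset.coe_mul, Finset.coe_inv]

/-- If `A` is a nonempty subset of a finite abelian group with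
`|A·A| < (3/2)|A|`, then `A·A⁻¹` is a subgroup. -/
theorem stmt1 {G : Type*} [CommGroup G] [Fintype G] [DecidableEq G]
    (A : Finset G) (hA : A.Nonempty)
    (hsmall : 2 * (A * A).card < 3 * A.card) :
    ∃ H : Subgroup G, ((A * A⁻¹ : Finset G) : Set G) = (H : Set G) :=
  stmt1_general A hsmall
end

section
/- Let G be a finite abelian group and A ⊆ G a nonempty subset satisfying (2/3)²|G| ≤ |A| ≤ (1/2)|G| and A·A⁻¹ = G. Then |A·A| ≥ √2 · |A|, and consequently |A·A| > |G|/2, hence A⁽⁴⁾ = G. -/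
/-!
Ruzsa's triangle inequality gives `|A·A⁻¹|·|A| ≤ |A·A|²`, and `A·A⁻¹ = G` turns this into
`|G|·|A| ≤ |A·A|²`. The upper bound `|G| ≥ 2|A|` yields `|A·A| ≥ √2·|A|`, the lower bound
`|A| ≥ (4/9)|G|` yields `|A·A| ≥ (2/3)|G| > |G|/2`. Two sets of more than half the group have
product the whole group, so `A⁽⁴⁾ = (A·A)·(A·A) = G`.
-/

open Pointwise Finset

namespace Finset

variable {G : Type*} [DecidableEq G]

theorem mul_eq_univ_of_card_lt_card_add_card [Group G] [Fintype G] {s t : Finset G}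
    (h : Fintype.card G < #s + #t) : s * t = univ := by
  refine eq_univ_iff_forall.2 fun g => ?_
  -- `s` meets `g • t⁻¹`, and `x = g * y⁻¹` means `g = x * y`.
  have hlt : #(univ : Finset G) < #s + #(g • t⁻¹) := by
    rwa [card_univ, card_smul_finset, card_inv]
  obtain ⟨x, hx⟩ :=
    inter_nonempty_of_card_lt_card_add_card (subset_univ s) (subset_univ _) hlt
  obtain ⟨hxs, hxt⟩ := mem_inter.1 hx
  obtain ⟨y, hy, rfl⟩ := mem_smul_finset.1 hxt
  obtain ⟨z, hz, rfl⟩ := mem_inv.1 hy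
  simpa using mul_mem_mul hxs hz

theorem card_mul_le_card_mul_self_sq [CommGroup G] [Fintype G] {A : Finset G}
    (hA : A * A⁻¹ = univ) : Fintype.card G * #A ≤ #(A * A) ^ 2 := by
  simpa [hA, sq] using ruzsa_triangle_inequality_mulInv_mul_mul A A A

end Finset

theorem stmt4_general {G : Type*} [CommGroup G] [Fintype G] [DecidableEq G]
    (A : Finset G)
    (hlow : (4 : ℝ) / 9 * Fintype.card G ≤ A.card)
    (hhigh : (A.card : ℝ) ≤ (Fintype.card G : ℝ) / 2)
    (hAA : A * A⁻¹ = Finset.univ) :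
    Real.sqrt 2 * A.card ≤ ((A * A).card : ℝ) ∧
    (Fintype.card G : ℝ) / 2 < ((A * A).card : ℝ) ∧
    A ^ 4 = Finset.univ := by
  have hruzsa : (Fintype.card G : ℝ) * #A ≤ (#(A * A) : ℝ) ^ 2 := by
    exact_mod_cast card_mul_le_card_mul_self_sq hAA
  have hG : (0 : ℝ) < Fintype.card G := by exact_mod_cast Fintype.card_pos
  have hhalf : (Fintype.card G : ℝ) / 2 < #(A * A) := by nlinarith
  refine ⟨?_, hhalf, ?_⟩
  · refine le_of_pow_le_pow_left₀ two_ne_zero (by positivity) ?_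
    rw [mul_pow, Real.sq_sqrt zero_le_two]
    nlinarith
  · have hcard : Fintype.card G < #(A * A) + #(A * A) := by
      exact_mod_cast (by linarith : (Fintype.card G : ℝ) < #(A * A) + #(A * A))
    rw [show A ^ 4 = A * A * (A * A) by rw [← sq, ← sq, ← pow_mul]]
    exact mul_eq_univ_of_card_lt_card_add_card hcard

/-- If `(2/3)²|G| ≤ |A| ≤ |G|/2` and `A·A⁻¹ = G`, then
`|A·A| ≥ √2·|A|`, consequently `|A·A| > |G|/2`, hence `A⁽⁴⁾ = G`. -/
theorem stmt4 {G : Type*} [CommGroup G] [Fintype G] [DecidableEq G]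
    (A : Finset G) (hA : A.Nonempty)
    (hlow : (4 : ℝ) / 9 * Fintype.card G ≤ A.card)
    (hhigh : (A.card : ℝ) ≤ (Fintype.card G : ℝ) / 2)
    (hAA : A * A⁻¹ = Finset.univ) :
    Real.sqrt 2 * A.card ≤ ((A * A).card : ℝ) ∧
    (Fintype.card G : ℝ) / 2 < ((A * A).card : ℝ) ∧
    A ^ 4 = Finset.univ :=
  stmt4_general A hlow hhigh hAA
end

section
/- Let q be prime, x < q, and w : ℕ → ℝ supported on [1, x] of the form w(n) = Σ_{d|n} λ_d where λ_d = 0 for d > D, λ_d = 0 unless d is squarefree, and |λ_d| ≤ 3^{ν(d)} (with ν(d) the number of distinct prime factors of d). Then Σ_{r=1}^{q-1} |ŵ(r)| ≪ q · D^{1+o(1)} · log q as q → ∞, where ŵ(r) = Σ_{n} w(n) e(−rn/q) is the additive Fourier transform mod q. -/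
/-!
Writing `w = λ * 1` and swapping the sums,
`ŵ(r) = Σ_{d ≤ x} λ_d Σ_{m ≤ x/d} e(-rdm/q)`. Since `q` is prime and `r, d < q`, the residue
`b = rd mod q` lies in `[1, q-1]`, so the inner geometric sum is at most `1 / sin(πb/q)`.
For fixed `d` the map `r ↦ rd mod q` permutes `[1, q-1]`, and `sin(πt) ≥ 2t(1-t)` gives
`Σ_{b=1}^{q-1} 1/sin(πb/q) ≤ q Σ_{b<q} 1/b ≤ q(1 + log q)`. Hence
`Σ_r |ŵ(r)| ≤ q(1 + log q) Σ_{d ≤ D} |λ_d|`, and `3^{ν(d)} ≪_ε d^ε` bounds the last sum by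
`D^{1+ε}`.
-/

open Finset Real

lemma sum_Icc_sum_divisors {M : Type*} [AddCommMonoid M] (x : ℕ) (f : ℕ → ℕ → M) :
    ∑ n ∈ Icc 1 x, ∑ d ∈ n.divisors, f d n = ∑ d ∈ Icc 1 x, ∑ m ∈ Icc 1 (x / d), f d (d * m) := by
  rw [sum_sigma', sum_sigma']
  refine sum_bij' (fun p _ => ⟨p.2, p.1 / p.2⟩) (fun p _ => ⟨p.2 * p.1, p.1⟩) ?_ ?_ ?_ ?_ ?_
  · rintro ⟨n, d⟩ h
    simp only [mem_sigma, mem_Icc, Nat.mem_divisors] at h ⊢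
    obtain ⟨⟨hn1, hnx⟩, hdn, -⟩ := h
    have hd : d ≤ n := Nat.le_of_dvd hn1 hdn
    have hd0 : 0 < d := Nat.pos_of_dvd_of_pos hdn hn1
    exact ⟨⟨hd0, hd.trans hnx⟩, Nat.div_pos hd hd0, Nat.div_le_div_right hnx⟩
  · rintro ⟨d, m⟩ h
    simp only [mem_sigma, mem_Icc, Nat.mem_divisors] at h ⊢
    obtain ⟨⟨hd1, -⟩, hm1, hmx⟩ := h
    have := (Nat.le_div_iff_mul_le hd1).1 hmx
    exact ⟨⟨Nat.mul_pos hm1 hd1, by linarith⟩, Dvd.intro_left m rfl, by positivity⟩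
  · rintro ⟨n, d⟩ h
    simp only [mem_sigma, Nat.mem_divisors] at h
    simp [Nat.div_mul_cancel h.2.1]
  · rintro ⟨d, m⟩ h
    simp only [mem_sigma, mem_Icc] at h
    simp [Nat.mul_div_cancel m (by omega : 0 < d)]
  · rintro ⟨n, d⟩ h
    simp only [mem_sigma, Nat.mem_divisors] at h
    simp [Nat.mul_div_cancel' h.2.1]

lemma sin_pi_mul_div_pos {q b : ℕ} (hb : 0 < b) (hbq : b < q) : 0 < sin (π * b / q) := by
  have hq : (0 : ℝ) < q := by exact_mod_cast hb.trans hbq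
  apply sin_pos_of_pos_of_lt_pi (by positivity)
  rw [div_lt_iff₀ hq]
  exact mul_lt_mul_of_pos_left (by exact_mod_cast hbq) pi_pos

lemma two_mul_mul_one_sub_le_sin_pi_mul {t : ℝ} (h0 : 0 ≤ t) (h1 : t ≤ 1) :
    2 * t * (1 - t) ≤ sin (π * t) := by
  wlog ht : t ≤ 1 / 2 generalizing t
  · have := this (t := 1 - t) (by linarith) (by linarith) (by linarith)
    rw [show π * (1 - t) = π - π * t by ring, sin_pi_sub] at this
    linarith
  have := mul_le_sin (x := π * t) (by positivity) (by nlinarith [pi_pos])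
  rw [show 2 / π * (π * t) = 2 * t by field_simp] at this
  nlinarith

lemma inv_sin_pi_mul_div_le {q b : ℕ} (hb : 0 < b) (hbq : b < q) :
    (sin (π * b / q))⁻¹ ≤ q / (2 * b) + q / (2 * (q - b)) := by
  have hb' : (0 : ℝ) < b := by exact_mod_cast hb
  have hbq' : (b : ℝ) < q := by exact_mod_cast hbq
  have hq' : (0 : ℝ) < q := hb'.trans hbq'
  have hlt : (b / q : ℝ) < 1 := (div_lt_one hq').2 hbq'
  have hpos : 0 < 2 * (b / q : ℝ) * (1 - b / q) := mul_pos (by positivity) (sub_pos.2 hlt)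
  have hqb : (q : ℝ) - b ≠ 0 := by linarith
  rw [mul_div_assoc]
  calc (sin (π * (b / q)))⁻¹ ≤ (2 * (b / q : ℝ) * (1 - b / q))⁻¹ :=
        inv_anti₀ hpos (two_mul_mul_one_sub_le_sin_pi_mul (by positivity) hlt.le)
    _ = q / (2 * b) + q / (2 * (q - b)) := by
      field_simp
      ring

lemma sum_Icc_reflect {M : Type*} [AddCommMonoid M] (q : ℕ) (g : ℕ → M) :
    ∑ b ∈ Icc 1 (q - 1), g (q - b) = ∑ b ∈ Icc 1 (q - 1), g b := by
  refine sum_nbij' (fun b => q - b) (fun b => q - b) ?_ ?_ ?_ ?_ ?_ <;> intro b hb <;>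
    simp at hb ⊢ <;> omega

lemma sum_Icc_inv_sin_pi_mul_div_le (q : ℕ) :
    ∑ b ∈ Icc 1 (q - 1), (sin (π * b / q))⁻¹ ≤ q * (1 + log q) := by
  have hreflect : ∑ b ∈ Icc 1 (q - 1), (q / (2 * (q - b)) : ℝ) =
      ∑ b ∈ Icc 1 (q - 1), (q / (2 * b) : ℝ) := by
    rw [← sum_Icc_reflect q (fun b => (q / (2 * b) : ℝ))]
    refine sum_congr rfl fun b hb => ?_
    rw [Nat.cast_sub (by simp at hb; omega)]
  have hharmonic : ∑ b ∈ Icc 1 (q - 1), (b : ℝ)⁻¹ ≤ 1 + log q := by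
    have := harmonic_le_one_add_log q
    simp_rw [harmonic_eq_sum_Icc, Rat.cast_sum, Rat.cast_inv, Rat.cast_natCast] at this
    refine le_trans (sum_le_sum_of_subset_of_nonneg ?_ fun _ _ _ => by positivity) this
    exact Icc_subset_Icc_right (Nat.sub_le q 1)
  calc ∑ b ∈ Icc 1 (q - 1), (sin (π * b / q))⁻¹
      ≤ ∑ b ∈ Icc 1 (q - 1), (q / (2 * b) + q / (2 * (q - b)) : ℝ) := by
        refine sum_le_sum fun b hb => ?_
        simp only [mem_Icc] at hb
        exact inv_sin_pi_mul_div_le hb.1 (by omega)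
    _ = q * ∑ b ∈ Icc 1 (q - 1), (b : ℝ)⁻¹ := by
        rw [sum_add_distrib, hreflect, mul_sum, ← sum_add_distrib]
        refine sum_congr rfl fun b _ => ?_
        ring
    _ ≤ q * (1 + log q) := by gcongr

lemma norm_sum_Icc_pow_le {z : ℂ} (hz : ‖z‖ = 1) (hz1 : z ≠ 1) (M : ℕ) :
    ‖∑ m ∈ Icc 1 M, z ^ m‖ ≤ 2 / ‖z - 1‖ := by
  rw [← Ico_add_one_right_eq_Icc, geom_sum_Ico hz1 (by omega), norm_div]
  gcongr
  calc ‖z ^ (M + 1) - z ^ 1‖ ≤ ‖z ^ (M + 1)‖ + ‖z ^ 1‖ := norm_sub_le _ _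
    _ = 2 := by norm_num [hz]

lemma exp_neg_two_pi_I_mul_div (q r n : ℕ) :
    Complex.exp (-(2 * π * Complex.I * r * n / q)) =
      Complex.exp (-(2 * π * Complex.I / q)) ^ (r * n) := by
  rw [← Complex.exp_nat_mul]
  push_cast
  ring_nf

lemma exp_neg_two_pi_I_div_pow_self (q : ℕ) : Complex.exp (-(2 * π * Complex.I / q)) ^ q = 1 := by
  rcases eq_or_ne q 0 with rfl | hq
  · simp
  rw [← Complex.exp_nat_mul, mul_neg, mul_div_cancel₀ _ (by exact_mod_cast hq), Complex.exp_neg,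
    Complex.exp_two_pi_mul_I, inv_one]

lemma norm_exp_neg_two_pi_I_div_pow_sub_one {q b : ℕ} (hb : 0 < b) (hbq : b < q) :
    ‖Complex.exp (-(2 * π * Complex.I / q)) ^ b - 1‖ = 2 * sin (π * b / q) := by
  rw [← Complex.exp_nat_mul,
    show (b : ℂ) * -(2 * π * Complex.I / q) = Complex.I * ((-(2 * π * b / q) : ℝ) : ℂ) by
      push_cast; ring,
    Complex.norm_exp_I_mul_ofReal_sub_one, norm_mul, Real.norm_two, Real.norm_eq_abs,
    show -(2 * π * b / q) / 2 = -(π * b / q) by ring, sin_neg, abs_neg,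
    abs_of_pos (sin_pi_mul_div_pos hb hbq)]

lemma norm_sum_Icc_exp_pow_le {q b : ℕ} (hb : 0 < b) (hbq : b < q) (M : ℕ) :
    ‖∑ m ∈ Icc 1 M, (Complex.exp (-(2 * π * Complex.I / q)) ^ b) ^ m‖ ≤ (sin (π * b / q))⁻¹ := by
  have hsin := norm_exp_neg_two_pi_I_div_pow_sub_one hb hbq
  have hpos := sin_pi_mul_div_pos hb hbq
  refine (norm_sum_Icc_pow_le (by simp [norm_pow, Complex.norm_exp]) ?_ M).trans_eq ?_
  · rintro h
    rw [h, sub_self, norm_zero] at hsin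
    linarith
  · rw [hsin]
    field_simp

lemma mul_mod_mem_Icc {q d r : ℕ} (hd : d.Coprime q) (hr : r ∈ Icc 1 (q - 1)) :
    r * d % q ∈ Icc 1 (q - 1) := by
  rw [mem_Icc] at hr ⊢
  have hq : 0 < q := by omega
  refine ⟨Nat.pos_of_ne_zero fun h => ?_, Nat.le_pred_of_lt (Nat.mod_lt _ hq)⟩
  have := (Nat.Coprime.dvd_of_dvd_mul_right hd.symm (Nat.dvd_of_mod_eq_zero h))
  exact absurd (Nat.le_of_dvd hr.1 this) (by omega)

lemma sum_Icc_mul_mod_eq {M : Type*} [AddCommMonoid M] {q d : ℕ} (hd : d.Coprime q)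
    (g : ℕ → M) : ∑ r ∈ Icc 1 (q - 1), g (r * d % q) = ∑ b ∈ Icc 1 (q - 1), g b := by
  have hmaps : Set.MapsTo (fun r => r * d % q) (Icc 1 (q - 1)) (Icc 1 (q - 1)) :=
    fun r hr => mul_mod_mem_Icc hd hr
  have hinj : Set.InjOn (fun r => r * d % q) (Icc 1 (q - 1)) := by
    intro r hr s hs hrs
    simp only [coe_Icc, Set.mem_Icc] at hr hs
    have := Nat.ModEq.cancel_right_of_coprime hd.symm hrs
    rwa [Nat.ModEq, Nat.mod_eq_of_lt (by omega), Nat.mod_eq_of_lt (by omega)] at this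
  exact sum_nbij _ hmaps hinj (surjOn_of_injOn_of_card_le _ hmaps hinj le_rfl) fun _ _ => rfl

lemma coprime_of_mem_Icc {q x d : ℕ} (hq : q.Prime) (hxq : x < q) (hd : d ∈ Icc 1 x) :
    d.Coprime q :=
  (Nat.coprime_of_lt_prime (by simp at hd; omega) (by simp at hd; omega) hq).symm

lemma norm_fourier_le {q x r : ℕ} (hq : q.Prime) (hxq : x < q) (hr : r ∈ Icc 1 (q - 1))
    {w lam : ℕ → ℝ} (hw : ∀ n, 1 ≤ n → n ≤ x → w n = ∑ d ∈ n.divisors, lam d) :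
    ‖∑ n ∈ Icc 1 x, (w n : ℂ) * Complex.exp (-(2 * π * Complex.I * r * n / q))‖ ≤
      ∑ d ∈ Icc 1 x, |lam d| * (sin (π * (r * d % q : ℕ) / q))⁻¹ := by
  set ζ := Complex.exp (-(2 * π * Complex.I / q))
  have hsum : ∑ n ∈ Icc 1 x, (w n : ℂ) * Complex.exp (-(2 * π * Complex.I * r * n / q)) =
      ∑ d ∈ Icc 1 x, (lam d : ℂ) * ∑ m ∈ Icc 1 (x / d), (ζ ^ (r * d % q)) ^ m := by
    calc _ = ∑ n ∈ Icc 1 x, ∑ d ∈ n.divisors, (lam d : ℂ) * ζ ^ (r * n) := by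
          refine sum_congr rfl fun n hn => ?_
          rw [mem_Icc] at hn
          rw [hw n hn.1 hn.2, exp_neg_two_pi_I_mul_div, Complex.ofReal_sum, sum_mul]
      _ = _ := by
          rw [sum_Icc_sum_divisors]
          refine sum_congr rfl fun d _ => ?_
          rw [mul_sum]
          refine sum_congr rfl fun m _ => ?_
          rw [← pow_eq_pow_mod _ (exp_neg_two_pi_I_div_pow_self q), ← pow_mul, mul_assoc r d m]
  rw [hsum]
  refine (norm_sum_le _ _).trans (sum_le_sum fun d hd => ?_)
  rw [norm_mul, Complex.norm_real, Real.norm_eq_abs]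
  have hb := mem_Icc.1 (mul_mod_mem_Icc (coprime_of_mem_Icc hq hxq hd) hr)
  exact mul_le_mul_of_nonneg_left (norm_sum_Icc_exp_pow_le hb.1 (by omega) _) (abs_nonneg _)

theorem sum_norm_fourier_le {q x : ℕ} (hq : q.Prime) (hxq : x < q)
    {w lam : ℕ → ℝ} (hw : ∀ n, 1 ≤ n → n ≤ x → w n = ∑ d ∈ n.divisors, lam d) :
    ∑ r ∈ Icc 1 (q - 1),
        ‖∑ n ∈ Icc 1 x, (w n : ℂ) * Complex.exp (-(2 * π * Complex.I * r * n / q))‖ ≤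
      (∑ d ∈ Icc 1 x, |lam d|) * (q * (1 + log q)) := by
  calc _ ≤ ∑ r ∈ Icc 1 (q - 1), ∑ d ∈ Icc 1 x, |lam d| * (sin (π * (r * d % q : ℕ) / q))⁻¹ :=
        sum_le_sum fun r hr => norm_fourier_le hq hxq hr hw
    _ = ∑ d ∈ Icc 1 x, |lam d| * ∑ b ∈ Icc 1 (q - 1), (sin (π * b / q))⁻¹ := by
        rw [sum_comm]
        refine sum_congr rfl fun d hd => ?_
        rw [← mul_sum, sum_Icc_mul_mod_eq (coprime_of_mem_Icc hq hxq hd)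
          fun b => (sin (π * b / q))⁻¹]
    _ ≤ _ := by
        rw [sum_mul]
        gcongr
        exact sum_Icc_inv_sin_pi_mul_div_le q

lemma exists_pow_card_primeFactors_le {c : ℝ} (hc : 1 ≤ c) {ε : ℝ} (hε : 0 < ε) :
    ∃ A > 0, ∀ d : ℕ, d ≠ 0 → c ^ d.primeFactors.card ≤ A * (d : ℝ) ^ ε := by
  set P := ⌈c ^ ε⁻¹⌉₊
  have hc_le : ∀ p : ℕ, P ≤ p → c ≤ (p : ℝ) ^ ε := fun p hp =>
    calc c = (c ^ ε⁻¹) ^ ε := by rw [← rpow_mul (by linarith), inv_mul_cancel₀ hε.ne', rpow_one]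
      _ ≤ (p : ℝ) ^ ε := by
        gcongr
        exact (Nat.le_ceil _).trans (by exact_mod_cast hp)
  refine ⟨c ^ P, by positivity, fun d hd => ?_⟩
  set S := d.primeFactors
  rw [← prod_const, ← prod_filter_mul_prod_filter_not S (P ≤ ·)]
  have hsmall : ∏ p ∈ S with ¬ P ≤ p, c ≤ c ^ P := by
    rw [prod_const]
    refine pow_le_pow_right₀ hc ((card_le_card fun p hp => ?_).trans (card_range P).le)
    simp only [mem_filter, not_le] at hp
    exact mem_range.2 hp.2
  have hlarge : ∏ p ∈ S with P ≤ p, c ≤ (d : ℝ) ^ ε := by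
    calc ∏ p ∈ S with P ≤ p, c ≤ ∏ p ∈ S with P ≤ p, (p : ℝ) ^ ε :=
          prod_le_prod (fun _ _ => by linarith) fun p hp => hc_le p (mem_filter.1 hp).2
      _ = ((∏ p ∈ S with P ≤ p, p : ℕ) : ℝ) ^ ε := by
          push_cast
          exact finsetProd_rpow _ _ (fun _ _ => by positivity) ε
      _ ≤ (d : ℝ) ^ ε := by
          gcongr
          refine Nat.le_of_dvd (Nat.pos_of_ne_zero hd) ?_
          exact (prod_dvd_prod_of_subset _ _ _ (filter_subset _ S)).trans
            (Nat.prod_primeFactors_dvd d)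
  rw [mul_comm (c ^ P)]
  exact mul_le_mul hlarge hsmall (prod_nonneg fun _ _ => by linarith) (by positivity)

lemma sum_Icc_abs_le_mul_rpow {lam : ℕ → ℝ} {x D : ℕ} {A ε : ℝ} (hε : 0 ≤ ε)
    (hsupp : ∀ d, D < d → lam d = 0) (hbound : ∀ d : ℕ, d ≠ 0 → |lam d| ≤ A * (d : ℝ) ^ ε) :
    ∑ d ∈ Icc 1 x, |lam d| ≤ A * (D : ℝ) ^ (1 + ε) := by
  have hA : 0 ≤ A := by simpa using (abs_nonneg _).trans (hbound 1 one_ne_zero)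
  calc ∑ d ∈ Icc 1 x, |lam d| ≤ ∑ d ∈ Icc 1 (max x D), |lam d| :=
        sum_le_sum_of_subset_of_nonneg (Icc_subset_Icc_right (le_max_left x D))
          fun _ _ _ => abs_nonneg _
    _ = ∑ d ∈ Icc 1 D, |lam d| := by
        refine (sum_subset (Icc_subset_Icc_right (le_max_right x D)) fun d hd hd' => ?_).symm
        simp only [mem_Icc] at hd hd'
        rw [hsupp d (by omega), abs_zero]
    _ ≤ ∑ d ∈ Icc 1 D, A * (D : ℝ) ^ ε := by
        refine sum_le_sum fun d hd => (hbound d (by simp at hd; omega)).trans ?_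
        gcongr
        exact_mod_cast (mem_Icc.1 hd).2
    _ = A * (D : ℝ) ^ (1 + ε) := by
        rcases eq_or_ne D 0 with rfl | hD
        · simp [zero_rpow (by linarith : 1 + ε ≠ 0)]
        rw [sum_const, Nat.card_Icc, nsmul_eq_mul, rpow_add (by positivity), rpow_one]
        push_cast
        ring

/-- For a Selberg-type upper-bound sieve weight
`w(n) = Σ_{d ∣ n} λ_d` supported on `[1,x]` with `x < q`, where `λ_d` vanishes for
`d > D` and for non-squarefree `d`, and `|λ_d| ≤ 3^{ν(d)}`, the `L¹` norm of the
additive Fourier transform satisfies `Σ_{r=1}^{q-1} |ŵ(r)| ≪ q · D^{1+o(1)} · log q`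
as `q → ∞`:  for every `ε > 0` there are `C` and `q₀` making the bound
`C · q · D^{1+ε} · log q` valid for all primes `q ≥ q₀`. -/
theorem stmt12 : ∀ ε : ℝ, 0 < ε → ∃ C : ℝ, 0 < C ∧ ∃ q0 : ℕ,
    ∀ (q x D : ℕ) (w lam : ℕ → ℝ),
      Nat.Prime q → q0 ≤ q → x < q → 1 ≤ D →
      (∀ d, D < d → lam d = 0) →
      (∀ d, ¬ Squarefree d → lam d = 0) →
      (∀ d, |lam d| ≤ (3 : ℝ) ^ d.primeFactors.card) →
      (∀ n, 1 ≤ n → n ≤ x → w n = ∑ d ∈ n.divisors, lam d) →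
      ∑ r ∈ Finset.Icc 1 (q - 1),
          ‖∑ n ∈ Finset.Icc 1 x,
            (w n : ℂ) * Complex.exp (-(2 * Real.pi * Complex.I * r * n / q))‖ ≤
        C * q * (D : ℝ) ^ ((1 : ℝ) + ε) * Real.log q := by
  intro ε hε
  obtain ⟨A, hA, hAd⟩ := exists_pow_card_primeFactors_le (c := 3) (by norm_num) hε
  refine ⟨2 * A, by positivity, 3, fun q x D w lam hq hq3 hxq _ hlamD _ hlam3 hw => ?_⟩
  have hlam : ∑ d ∈ Icc 1 x, |lam d| ≤ A * (D : ℝ) ^ (1 + ε) :=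
    sum_Icc_abs_le_mul_rpow hε.le hlamD fun d hd => (hlam3 d).trans (hAd d hd)
  have hlog : 1 ≤ log q := by
    rw [le_log_iff_exp_le (by positivity)]
    have : (3 : ℝ) ≤ q := by exact_mod_cast hq3
    linarith [exp_one_lt_d9]
  calc _ ≤ (∑ d ∈ Icc 1 x, |lam d|) * (q * (1 + log q)) := sum_norm_fourier_le hq hxq hw
    _ ≤ (A * (D : ℝ) ^ (1 + ε)) * (q * (2 * log q)) := by gcongr; linarith
    _ = _ := by ring
end
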